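/- Discrete comparison principle: let Φ and Z be vector mesh functions on the grid such that, for each i = 1,…,n, |Z_i| ≤ Φ_i at all boundary mesh points (j = 0, j = N or k = 0) and |(L^{M,N}Z)_i| ≤ (L^{M,N}Φ)_i at all interior mesh points. Then |Z_i| ≤ Φ_i at every mesh point for each i = 1,…,n. -/
import Mathlib


/-- The discrete operator `L^{M,N}` applied to the vector mesh function `Ψ`
(component `i`, space index `j`, time index `k`), on an arbitrary mesh
`x : ℕ → ℝ`, `t : ℕ → ℝ`:
`L^{M,N}Ψ = D_t⁻ Ψ − ε_i δ_x² Ψ + Σ_l a_il Ψ_l`. -/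
noncomputable def discreteL (n : ℕ) (ε : ℕ → ℝ) (A : ℕ → ℕ → ℝ → ℝ → ℝ)
    (x t : ℕ → ℝ) (Ψ : ℕ → ℕ → ℕ → ℝ) (i j k : ℕ) : ℝ :=
  (Ψ i j k - Ψ i j (k - 1)) / (t k - t (k - 1))
    - ε i * (((Ψ i (j + 1) k - Ψ i j k) / (x (j + 1) - x j)
          - (Ψ i j k - Ψ i (j - 1) k) / (x j - x (j - 1)))
        / ((x (j + 1) - x (j - 1)) / 2))
    + ∑ l ∈ Finset.Icc 1 n, A i l (x j) (t k) * Ψ l j k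

private lemma discreteL_add (n : ℕ) (ε : ℕ → ℝ) (A : ℕ → ℕ → ℝ → ℝ → ℝ)
    (x t : ℕ → ℝ) (Φ Z : ℕ → ℕ → ℕ → ℝ) (i j k : ℕ) :
    discreteL n ε A x t (fun i j k => Φ i j k + Z i j k) i j k
      = discreteL n ε A x t Φ i j k + discreteL n ε A x t Z i j k := by
  simp only [discreteL, mul_add, Finset.sum_add_distrib]
  ring

private lemma discreteL_sub (n : ℕ) (ε : ℕ → ℝ) (A : ℕ → ℕ → ℝ → ℝ → ℝ)
    (x t : ℕ → ℝ) (Φ Z : ℕ → ℕ → ℕ → ℝ) (i j k : ℕ) :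
    discreteL n ε A x t (fun i j k => Φ i j k - Z i j k) i j k
      = discreteL n ε A x t Φ i j k - discreteL n ε A x t Z i j k := by
  simp only [discreteL, mul_sub, Finset.sum_sub_distrib]
  ring

/-- **Discrete comparison principle** (Lemma 11 of the paper): if, for each
component `i`, `|Z_i| ≤ Φ_i` at all boundary mesh points and
`|(L^{M,N}Z)_i| ≤ (L^{M,N}Φ)_i` at all interior mesh points, then
`|Z_i| ≤ Φ_i` at every mesh point. -/
theorem stmt_17
    (n : ℕ) (hn : 1 ≤ n) (T : ℝ) (hT : 0 < T)
    (ε : ℕ → ℝ)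
    (hε0 : ∀ i ∈ Finset.Icc 1 n, 0 < ε i)
    (hε1 : ∀ i ∈ Finset.Icc 1 n, ε i ≤ 1)
    (hεmono : ∀ i j : ℕ, 1 ≤ i → i < j → j ≤ n → ε i < ε j)
    (N M : ℕ) (hN : 1 ≤ N) (hM : 1 ≤ M)
    (x : ℕ → ℝ) (hx0 : x 0 = 0) (hxN : x N = 1)
    (hxmono : ∀ j j' : ℕ, j < j' → j' ≤ N → x j < x j')
    (t : ℕ → ℝ) (ht0 : t 0 = 0) (htM : t M = T)
    (htmono : ∀ k k' : ℕ, k < k' → k' ≤ M → t k < t k')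
    (A : ℕ → ℕ → ℝ → ℝ → ℝ)
    (hAdiag : ∀ i ∈ Finset.Icc 1 n, ∀ j ≤ N, ∀ k ≤ M,
      ∑ l ∈ (Finset.Icc 1 n).erase i, |A i l (x j) (t k)| < A i i (x j) (t k))
    (hAoff : ∀ i ∈ Finset.Icc 1 n, ∀ l ∈ Finset.Icc 1 n, i ≠ l →
      ∀ j ≤ N, ∀ k ≤ M, A i l (x j) (t k) ≤ 0)
    (Φ Z : ℕ → ℕ → ℕ → ℝ)
    (hΓ : ∀ i ∈ Finset.Icc 1 n, ∀ j ≤ N, ∀ k ≤ M,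
      (j = 0 ∨ j = N ∨ k = 0) → |Z i j k| ≤ Φ i j k)
    (hL : ∀ i ∈ Finset.Icc 1 n, ∀ j k : ℕ, 0 < j → j < N → 0 < k → k ≤ M →
      |discreteL n ε A x t Z i j k| ≤ discreteL n ε A x t Φ i j k) :
    ∀ i ∈ Finset.Icc 1 n, ∀ j ≤ N, ∀ k ≤ M, |Z i j k| ≤ Φ i j k := by
  -- Discrete minimum principle for a single mesh function `W`.
  have key : ∀ W : ℕ → ℕ → ℕ → ℝ,
      (∀ i ∈ Finset.Icc 1 n, ∀ j ≤ N, ∀ k ≤ M, (j = 0 ∨ j = N ∨ k = 0) → 0 ≤ W i j k) →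
      (∀ i ∈ Finset.Icc 1 n, ∀ j k : ℕ, 0 < j → j < N → 0 < k → k ≤ M →
        0 ≤ discreteL n ε A x t W i j k) →
      ∀ k ≤ M, ∀ i ∈ Finset.Icc 1 n, ∀ j ≤ N, 0 ≤ W i j k := by
    intro W hbd hLW k
    induction k with
    | zero =>
      intro hk i hi j hj
      exact hbd i hi j hj 0 hk (Or.inr (Or.inr rfl))
    | succ k ih =>
      intro hk
      have hkM : k ≤ M := Nat.le_of_succ_le hk
      have ihk := ih hkM
      -- take a minimizing point at time level k+1
      set S : Finset (ℕ × ℕ) := (Finset.Icc 1 n) ×ˢ (Finset.Icc 0 N) with hS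
      have hSne : S.Nonempty := ⟨(1, 0), by simp [hS, hn]⟩
      obtain ⟨p, hpS, hpmin⟩ := S.exists_min_image (fun p => W p.1 p.2 (k + 1)) hSne
      obtain ⟨i₀, j₀⟩ := p
      rw [hS, Finset.mem_product] at hpS
      have hi₀ : i₀ ∈ Finset.Icc 1 n := hpS.1
      have hj₀N : j₀ ≤ N := (Finset.mem_Icc.mp hpS.2).2
      suffices hm0 : 0 ≤ W i₀ j₀ (k + 1) by
        intro i hi j hj
        refine le_trans hm0 (hpmin (i, j) ?_)
        rw [hS, Finset.mem_product]
        exact ⟨hi, Finset.mem_Icc.mpr ⟨Nat.zero_le _, hj⟩⟩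
      by_contra hneg
      push_neg at hneg
      -- j₀ is interior
      have hj₀0 : 0 < j₀ := by
        rcases Nat.eq_zero_or_pos j₀ with h0 | h0
        · exact absurd (hbd i₀ hi₀ j₀ hj₀N (k + 1) hk (Or.inl h0)) (not_le.mpr hneg)
        · exact h0
      have hj₀N' : j₀ < N := by
        rcases lt_or_eq_of_le hj₀N with h | h
        · exact h
        · exact absurd (hbd i₀ hi₀ j₀ hj₀N (k + 1) hk (Or.inr (Or.inl h))) (not_le.mpr hneg)
      have hmin : ∀ i ∈ Finset.Icc 1 n, ∀ j ≤ N, W i₀ j₀ (k + 1) ≤ W i j (k + 1) := by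
        intro i hi j hj
        refine hpmin (i, j) ?_
        rw [hS, Finset.mem_product]
        exact ⟨hi, Finset.mem_Icc.mpr ⟨Nat.zero_le _, hj⟩⟩
      have hLW0 := hLW i₀ hi₀ j₀ (k + 1) hj₀0 hj₀N' (Nat.succ_pos k) hk
      rw [discreteL] at hLW0
      simp only [Nat.add_sub_cancel] at hLW0
      -- the time-difference term is negative
      have hΔt : 0 < t (k + 1) - t k := sub_pos.mpr (htmono k (k + 1) (lt_add_one k) hk)
      have hWk : 0 ≤ W i₀ j₀ k := ihk i₀ hi₀ j₀ hj₀N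
      have ht1 : (W i₀ j₀ (k + 1) - W i₀ j₀ k) / (t (k + 1) - t k) < 0 :=
        div_neg_of_neg_of_pos (by linarith) hΔt
      -- the diffusion term is nonnegative
      have hxp : 0 < x (j₀ + 1) - x j₀ := sub_pos.mpr (hxmono j₀ (j₀ + 1) (lt_add_one j₀) hj₀N')
      have hxm : 0 < x j₀ - x (j₀ - 1) :=
        sub_pos.mpr (hxmono (j₀ - 1) j₀ (Nat.sub_lt hj₀0 one_pos) hj₀N)
      have hxo : 0 < (x (j₀ + 1) - x (j₀ - 1)) / 2 := by
        have := hxmono (j₀ - 1) (j₀ + 1) (lt_of_lt_of_le (Nat.sub_lt hj₀0 one_pos)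
          (Nat.le_succ j₀)) hj₀N'
        linarith
      have hWp : W i₀ j₀ (k + 1) ≤ W i₀ (j₀ + 1) (k + 1) := hmin i₀ hi₀ (j₀ + 1) hj₀N'
      have hWm : W i₀ j₀ (k + 1) ≤ W i₀ (j₀ - 1) (k + 1) :=
        hmin i₀ hi₀ (j₀ - 1) (le_trans (Nat.sub_le j₀ 1) hj₀N)
      have hδ : 0 ≤ ((W i₀ (j₀ + 1) (k + 1) - W i₀ j₀ (k + 1)) / (x (j₀ + 1) - x j₀)
            - (W i₀ j₀ (k + 1) - W i₀ (j₀ - 1) (k + 1)) / (x j₀ - x (j₀ - 1)))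
          / ((x (j₀ + 1) - x (j₀ - 1)) / 2) := by
        apply div_nonneg _ (le_of_lt hxo)
        have h1 : 0 ≤ (W i₀ (j₀ + 1) (k + 1) - W i₀ j₀ (k + 1)) / (x (j₀ + 1) - x j₀) :=
          div_nonneg (by linarith) (le_of_lt hxp)
        have h2 : (W i₀ j₀ (k + 1) - W i₀ (j₀ - 1) (k + 1)) / (x j₀ - x (j₀ - 1)) ≤ 0 :=
          div_nonpos_of_nonpos_of_nonneg (by linarith) (le_of_lt hxm)
        linarith
      have hε : 0 < ε i₀ := hε0 i₀ hi₀
      have ht2 : 0 ≤ ε i₀ * (((W i₀ (j₀ + 1) (k + 1) - W i₀ j₀ (k + 1)) / (x (j₀ + 1) - x j₀)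
            - (W i₀ j₀ (k + 1) - W i₀ (j₀ - 1) (k + 1)) / (x j₀ - x (j₀ - 1)))
          / ((x (j₀ + 1) - x (j₀ - 1)) / 2)) := mul_nonneg (le_of_lt hε) hδ
      -- the reaction term is negative
      have hsum : ∑ l ∈ Finset.Icc 1 n, A i₀ l (x j₀) (t (k + 1)) * W l j₀ (k + 1)
          ≤ (∑ l ∈ Finset.Icc 1 n, A i₀ l (x j₀) (t (k + 1))) * W i₀ j₀ (k + 1) := by
        rw [Finset.sum_mul]
        apply Finset.sum_le_sum
        intro l hl
        rcases eq_or_ne i₀ l with h | h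
        · rw [h]
        · exact mul_le_mul_of_nonpos_left (hmin l hl j₀ hj₀N)
            (hAoff i₀ hi₀ l hl h j₀ hj₀N (k + 1) hk)
      have hσ : 0 < ∑ l ∈ Finset.Icc 1 n, A i₀ l (x j₀) (t (k + 1)) := by
        have hdiag := hAdiag i₀ hi₀ j₀ hj₀N (k + 1) hk
        rw [← Finset.add_sum_erase _ _ hi₀]
        have : -(∑ l ∈ (Finset.Icc 1 n).erase i₀, |A i₀ l (x j₀) (t (k + 1))|)
            ≤ ∑ l ∈ (Finset.Icc 1 n).erase i₀, A i₀ l (x j₀) (t (k + 1)) := by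
          rw [← Finset.sum_neg_distrib]
          exact Finset.sum_le_sum fun l _ => neg_abs_le _
        linarith
      have ht3 : (∑ l ∈ Finset.Icc 1 n, A i₀ l (x j₀) (t (k + 1))) * W i₀ j₀ (k + 1) < 0 :=
        mul_neg_of_pos_of_neg hσ hneg
      linarith
  -- apply the minimum principle to Φ + Z and Φ - Z
  have h1 : ∀ k ≤ M, ∀ i ∈ Finset.Icc 1 n, ∀ j ≤ N, 0 ≤ Φ i j k + Z i j k := by
    apply key
    · intro i hi j hj k hk hb
      have := hΓ i hi j hj k hk hb
      have := abs_le.mp this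
      linarith [this.1]
    · intro i hi j k hj hjN hk hkM
      have := hL i hi j k hj hjN hk hkM
      have h' := (abs_le.mp this).1
      rw [discreteL_add]
      linarith
  have h2 : ∀ k ≤ M, ∀ i ∈ Finset.Icc 1 n, ∀ j ≤ N, 0 ≤ Φ i j k - Z i j k := by
    apply key
    · intro i hi j hj k hk hb
      have := hΓ i hi j hj k hk hb
      have := abs_le.mp this
      linarith [this.2]
    · intro i hi j k hj hjN hk hkM
      have := hL i hi j k hj hjN hk hkM
      have h' := (abs_le.mp this).2
      rw [discreteL_sub]
      linarith
  intro i hi j hj k hk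
  rw [abs_le]
  constructor
  · linarith [h1 k hk i hi j hj]
  · linarith [h2 k hk i hi j hj]
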